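/- Let 0 ≤ r ≤ N and 0 ≤ K < N. There exists a real (N−r+1)×(N−r+1) matrix M, independent of W, such that for every W ∈ W_r and every 0 ≤ ℓ ≤ N−r, P_K(A₊^{ℓ}W) = Σ_{k=0}^{N−r} M(k,ℓ)·A₊^{k}W. -/

import Mathlib

open Finset

/-- Outer adjacency operator on vertex functions of the Boolean hypercube `B_N`:
`(A₊V)(S) = Σ_{s∈S} V(S∖{s})`. -/
def Aplus (N : ℕ) (V : Finset (Fin N) → ℝ) : Finset (Fin N) → ℝ :=
  fun S => ∑ s ∈ S, V (S.erase s)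

/-- Inner adjacency operator: `(A₋V)(R) = Σ_{b∉R} V(R∪{b})`. -/
def Aminus (N : ℕ) (V : Finset (Fin N) → ℝ) : Finset (Fin N) → ℝ :=
  fun R => ∑ b ∈ Rᶜ, V (insert b R)

/-- Adjacency operator `A = A₊ + A₋`. -/
def Adj (N : ℕ) (V : Finset (Fin N) → ℝ) : Finset (Fin N) → ℝ :=
  fun S => Aplus N V S + Aminus N V S

/-- Graph Laplacian `L = N·I − A`. -/
def Lap (N : ℕ) (V : Finset (Fin N) → ℝ) : Finset (Fin N) → ℝ :=
  fun S => (N : ℝ) * V S - Adj N V S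

/-- Inner product `⟨V,U⟩ = Σ_S V(S)U(S)` on vertex functions. -/
def inner' (N : ℕ) (V U : Finset (Fin N) → ℝ) : ℝ :=
  ∑ S : Finset (Fin N), V S * U S

/-- `V` is supported on the Hamming sphere `Σ_r` (vanishes off sets of cardinality `r`). -/
def suppOn (N r : ℕ) (V : Finset (Fin N) → ℝ) : Prop :=
  ∀ S : Finset (Fin N), S.card ≠ r → V S = 0

/-- Membership in `W_r`: supported on `Σ_r` and orthogonal to `A₊ℓ²(Σ_{r−1})`.
(For `r = 0` the orthogonality condition is vacuous, so `W_0 = ℓ²(Σ_0)`.) -/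
def memW (N r : ℕ) (W : Finset (Fin N) → ℝ) : Prop :=
  suppOn N r W ∧
    ∀ U : Finset (Fin N) → ℝ, suppOn N (r - 1) U → inner' N W (Aplus N U) = 0

/-- `m(r,k) = Σ_{j=0}^{k} (N − 2(r+j))`. -/
def mcoef (N r k : ℕ) : ℝ :=
  ∑ j ∈ Finset.range (k + 1), ((N : ℝ) - 2 * ((r : ℝ) + (j : ℝ)))

/-- Hadamard vector `H_S(R) = (−1)^{|R∩S|}`. -/
def Had (N : ℕ) (S R : Finset (Fin N)) : ℝ := (-1 : ℝ) ^ (R ∩ S).card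

/-- Spatial truncation `Q_K`: restriction to the Hamming ball of radius `K`. -/
def QK (N K : ℕ) (V : Finset (Fin N) → ℝ) : Finset (Fin N) → ℝ :=
  fun S => if S.card ≤ K then V S else 0

/-- Spectral projection `P_K`: orthogonal projection onto `span{H_S : |S| ≤ K}`,
given by `P_K V = Σ_{|S|≤K} (⟨V,H_S⟩/2^N)·H_S`. -/
noncomputable def PK (N K : ℕ) (V : Finset (Fin N) → ℝ) : Finset (Fin N) → ℝ :=
  fun R => ∑ S ∈ Finset.univ.filter (fun S : Finset (Fin N) => S.card ≤ K),
    (inner' N V (Had N S) / 2 ^ N) * Had N S R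

/-- Diagonal operator `(TV)(R) = √(2|R|)·V(R)`. -/
noncomputable def Tdiag (N : ℕ) (V : Finset (Fin N) → ℝ) : Finset (Fin N) → ℝ :=
  fun R => Real.sqrt (2 * (R.card : ℝ)) * V R

/-- Boolean difference operator conjugated by the Hadamard transform:
`HBDO = T(αI − L)T + βL`. -/
noncomputable def HBDO (N : ℕ) (α β : ℝ) (V : Finset (Fin N) → ℝ) : Finset (Fin N) → ℝ :=
  fun R => Tdiag N (fun S => α * Tdiag N V S - Lap N (Tdiag N V) S) R + β * Lap N V R

/-- Hadamard transform `(HV)(R) = Σ_S (−1)^{|R∩S|} V(S)`. -/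
def Hmat (N : ℕ) (V : Finset (Fin N) → ℝ) : Finset (Fin N) → ℝ :=
  fun R => ∑ S : Finset (Fin N), Had N S R * V S

/-- Commutator `C = A₋A₊ − A₊A₋`. -/
def Cop (N : ℕ) (V : Finset (Fin N) → ℝ) : Finset (Fin N) → ℝ :=
  fun S => Aminus N (Aplus N V) S - Aplus N (Aminus N V) S


variable {N : ℕ}

lemma aplus_sum_smul {ι : Type*} (s : Finset ι) (a : ι → ℝ) (f : ι → Finset (Fin N) → ℝ) :
    Aplus N (fun S => ∑ i ∈ s, a i * f i S) = fun S => ∑ i ∈ s, a i * Aplus N (f i) S := by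
  funext S
  simp only [Aplus, Finset.mul_sum]
  exact Finset.sum_comm

lemma aminus_sum_smul {ι : Type*} (s : Finset ι) (a : ι → ℝ) (f : ι → Finset (Fin N) → ℝ) :
    Aminus N (fun S => ∑ i ∈ s, a i * f i S) = fun S => ∑ i ∈ s, a i * Aminus N (f i) S := by
  funext S
  simp only [Aminus, Finset.mul_sum]
  exact Finset.sum_comm

lemma lap_sum_smul {ι : Type*} (s : Finset ι) (a : ι → ℝ) (f : ι → Finset (Fin N) → ℝ) :
    Lap N (fun S => ∑ i ∈ s, a i * f i S) = fun S => ∑ i ∈ s, a i * Lap N (f i) S := by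
  funext S
  simp only [Lap, Adj, aplus_sum_smul, aminus_sum_smul, Finset.mul_sum, mul_sub,
    ← Finset.sum_add_distrib, ← Finset.sum_sub_distrib]
  congr 1; funext i; ring

lemma aplus_smul (c : ℝ) (V : Finset (Fin N) → ℝ) :
    Aplus N (fun S => c * V S) = fun S => c * Aplus N V S := by
  funext S; simp [Aplus, Finset.mul_sum]

lemma suppOn_aplus {r : ℕ} {V : Finset (Fin N) → ℝ} (h : suppOn N r V) :
    suppOn N (r + 1) (Aplus N V) := by
  intro S hS
  apply Finset.sum_eq_zero
  intro s hs
  apply h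
  rw [Finset.card_erase_of_mem hs]
  intro he
  apply hS
  have : 1 ≤ S.card := Finset.card_pos.mpr ⟨s, hs⟩
  omega

lemma suppOn_aplus_iter {r : ℕ} {V : Finset (Fin N) → ℝ} (h : suppOn N r V) (k : ℕ) :
    suppOn N (r + k) ((Aplus N)^[k] V) := by
  induction k with
  | zero => simpa using h
  | succ k ih =>
    rw [Function.iterate_succ_apply']
    have := suppOn_aplus ih
    exact this

lemma cop_eq (V : Finset (Fin N) → ℝ) (R : Finset (Fin N)) :
    Cop N V R = ((N : ℝ) - 2 * R.card) * V R := by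
  have h1 : Aminus N (Aplus N V) R
      = (Rᶜ.card : ℝ) * V R + ∑ b ∈ Rᶜ, ∑ s ∈ R, V (insert b (R.erase s)) := by
    simp only [Aminus, Aplus]
    have : ∀ b ∈ Rᶜ, ∑ s ∈ insert b R, V ((insert b R).erase s)
        = V R + ∑ s ∈ R, V (insert b (R.erase s)) := by
      intro b hb
      have hbR : b ∉ R := by simpa using hb
      rw [Finset.sum_insert hbR, Finset.erase_insert hbR]
      congr 1
      apply Finset.sum_congr rfl
      intro s hs
      congr 1
      rw [Finset.erase_insert_of_ne]
      rintro rfl; exact hbR hs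
    rw [Finset.sum_congr rfl this, Finset.sum_add_distrib, Finset.sum_const, nsmul_eq_mul]
  have h2 : Aplus N (Aminus N V) R
      = (R.card : ℝ) * V R + ∑ s ∈ R, ∑ b ∈ Rᶜ, V (insert b (R.erase s)) := by
    simp only [Aplus, Aminus]
    have : ∀ s ∈ R, ∑ b ∈ (R.erase s)ᶜ, V (insert b (R.erase s))
        = V R + ∑ b ∈ Rᶜ, V (insert b (R.erase s)) := by
      intro s hs
      have hc : (R.erase s)ᶜ = insert s Rᶜ := by
        ext x
        simp only [Finset.mem_compl, Finset.mem_erase, Finset.mem_insert]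
        tauto
      rw [hc, Finset.sum_insert (by simp [hs]), Finset.insert_erase hs]
    rw [Finset.sum_congr rfl this, Finset.sum_add_distrib, Finset.sum_const, nsmul_eq_mul]
  have hcard : (Rᶜ.card : ℝ) = (N : ℝ) - R.card := by
    have := Finset.card_compl R
    have hle : R.card ≤ N := by simpa using Finset.card_le_univ R
    rw [this]
    simp [Nat.cast_sub hle]
  rw [Cop, h1, h2, Finset.sum_comm, hcard]
  ring
lemma adjoint (V U : Finset (Fin N) → ℝ) :
    inner' N (Aminus N V) U = inner' N V (Aplus N U) := by
  simp only [inner', Aminus, Aplus, Finset.sum_mul, Finset.mul_sum]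
  rw [Finset.sum_sigma', Finset.sum_sigma']
  apply Finset.sum_nbij' (i := fun p => (⟨insert p.2 p.1, p.2⟩ : (_ : Finset (Fin N)) × Fin N))
    (j := fun p => (⟨p.1.erase p.2, p.2⟩ : (_ : Finset (Fin N)) × Fin N))
  · intro p hp
    simp only [Finset.mem_sigma, Finset.mem_univ, true_and] at hp ⊢
    simp
  · intro p hp
    simp only [Finset.mem_sigma, Finset.mem_univ, true_and] at hp ⊢
    simp [hp]
  · intro p hp
    simp only [Finset.mem_sigma, Finset.mem_univ, true_and, Finset.mem_compl] at hp
    simp [Finset.erase_insert hp]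
  · intro p hp
    simp only [Finset.mem_sigma, Finset.mem_univ, true_and] at hp
    simp [Finset.insert_erase hp]
  · intro p hp
    simp only [Finset.mem_sigma, Finset.mem_univ, true_and, Finset.mem_compl] at hp
    simp [Finset.erase_insert hp, mul_comm]

lemma aminus_zero {r : ℕ} {W : Finset (Fin N) → ℝ} (hW : memW N r W) :
    Aminus N W = fun _ => 0 := by
  have hsupp : suppOn N (r - 1) (Aminus N W) := by
    intro R hR
    apply Finset.sum_eq_zero
    intro b hb
    apply hW.1
    rw [Finset.card_insert_of_notMem (by simpa using hb)]
    omega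
  have h0 : inner' N (Aminus N W) (Aminus N W) = 0 := by
    rw [adjoint]
    exact hW.2 (Aminus N W) hsupp
  funext R
  have := (Finset.sum_eq_zero_iff_of_nonneg
    (fun S _ => mul_self_nonneg (Aminus N W S))).mp h0 R (Finset.mem_univ R)
  exact mul_self_eq_zero.mp this

lemma cop_rearrange (V : Finset (Fin N) → ℝ) (S : Finset (Fin N)) :
    Aminus N (Aplus N V) S = Aplus N (Aminus N V) S + Cop N V S := by
  simp [Cop]

lemma mcoef_zero (r : ℕ) : mcoef N r 0 = (N : ℝ) - 2 * r := by
  simp [mcoef]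

lemma mcoef_succ (r k : ℕ) :
    mcoef N r (k + 1) = mcoef N r k + ((N : ℝ) - 2 * ((r : ℝ) + (k : ℝ) + 1)) := by
  rw [mcoef, Finset.sum_range_succ, ← mcoef]
  push_cast
  ring

lemma aminus_iter {r : ℕ} {W : Finset (Fin N) → ℝ} (hW : memW N r W) (k : ℕ) :
    Aminus N ((Aplus N)^[k + 1] W) = fun S => mcoef N r k * (Aplus N)^[k] W S := by
  induction k with
  | zero =>
    funext S
    rw [Function.iterate_one, cop_rearrange, aminus_zero hW]
    have hap : Aplus N (fun _ => (0:ℝ)) S = 0 := by simp [Aplus]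
    rw [hap, zero_add, cop_eq, Function.iterate_zero_apply, mcoef_zero]
    by_cases hc : S.card = r
    · rw [hc]
    · rw [hW.1 S hc, mul_zero, mul_zero]
  | succ k ih =>
    funext S
    rw [Function.iterate_succ_apply' (Aplus N) (k+1) W, cop_rearrange, ih, aplus_smul, cop_eq]
    rw [← Function.iterate_succ_apply' (Aplus N) k W]
    have hsupp := suppOn_aplus_iter hW.1 (k + 1)
    rw [mcoef_succ]
    by_cases hc : S.card = r + (k + 1)
    · rw [hc]; push_cast; ring
    · have h0 : (Aplus N)^[k+1] W S = 0 := hsupp S hc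
      simp only [Nat.succ_eq_add_one]
      rw [h0]; ring
lemma lap_had (S : Finset (Fin N)) :
    Lap N (Had N S) = fun R => 2 * (S.card : ℝ) * Had N S R := by
  funext R
  classical
  set c := (R ∩ S).card with hc
  have hap : Aplus N (Had N S) R
      = (c : ℝ) * (-1 : ℝ) ^ (c - 1) + (((R \ S).card : ℝ)) * (-1 : ℝ) ^ c := by
    rw [Aplus, ← Finset.sum_filter_add_sum_filter_not R (· ∈ S)]
    congr 1
    · rw [Finset.sum_congr rfl (fun s hs => ?_), Finset.sum_const, nsmul_eq_mul,
        Finset.filter_mem_eq_inter]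
      rw [Finset.mem_filter] at hs
      rw [Had, Finset.erase_inter, Finset.card_erase_of_mem
        (Finset.mem_inter.mpr ⟨hs.1, hs.2⟩)]
    · have hfs : R.filter (fun s => ¬ s ∈ S) = R \ S := by
        ext x; simp [Finset.mem_sdiff]
      have hterm : ∀ s ∈ R.filter (fun s => ¬ s ∈ S), Had N S (R.erase s) = (-1:ℝ)^c := by
        intro s hs
        rw [Finset.mem_filter] at hs
        rw [Had, Finset.erase_inter, Finset.erase_eq_of_notMem (by simp [hs.2])]
      rw [Finset.sum_congr rfl hterm, Finset.sum_const, nsmul_eq_mul, hfs]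
  have ham : Aminus N (Had N S) R
      = ((Rᶜ ∩ S).card : ℝ) * (-1 : ℝ) ^ (c + 1) + (((Rᶜ \ S).card : ℝ)) * (-1 : ℝ) ^ c := by
    rw [Aminus, ← Finset.sum_filter_add_sum_filter_not Rᶜ (· ∈ S)]
    congr 1
    · rw [Finset.sum_congr rfl (fun b hb => ?_), Finset.sum_const, nsmul_eq_mul,
        Finset.filter_mem_eq_inter]
      rw [Finset.mem_filter, Finset.mem_compl] at hb
      rw [Had, Finset.insert_inter_of_mem hb.2, Finset.card_insert_of_notMem
        (fun hx => hb.1 (Finset.mem_inter.mp hx).1)]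
    · have hfs : Rᶜ.filter (fun b => ¬ b ∈ S) = Rᶜ \ S := by
        ext x; simp [Finset.mem_sdiff]
      have hterm : ∀ b ∈ Rᶜ.filter (fun b => ¬ b ∈ S), Had N S (insert b R) = (-1:ℝ)^c := by
        intro b hb
        rw [Finset.mem_filter] at hb
        rw [Had, Finset.insert_inter_of_notMem hb.2]
      rw [Finset.sum_congr rfl hterm, Finset.sum_const, nsmul_eq_mul, hfs]
  have hfirst : (c : ℝ) * (-1 : ℝ) ^ (c - 1) = -((c : ℝ) * (-1 : ℝ) ^ c) := by
    cases c with
    | zero => simp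
    | succ m => rw [Nat.add_sub_cancel]; push_cast; rw [pow_succ]; ring
  have e1 : (c : ℝ) + ((R \ S).card : ℝ) = (R.card : ℝ) := by
    have := Finset.card_inter_add_card_sdiff R S
    exact_mod_cast congrArg (Nat.cast : ℕ → ℝ) this
  have e2 : (c : ℝ) + ((Rᶜ ∩ S).card : ℝ) = (S.card : ℝ) := by
    have hset : S ∩ Rᶜ = S \ R := by ext x; simp [Finset.mem_sdiff]
    have h' : (R ∩ S).card + (Rᶜ ∩ S).card = S.card := by
      rw [Finset.inter_comm R S, Finset.inter_comm Rᶜ S, hset]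
      exact Finset.card_inter_add_card_sdiff S R
    exact_mod_cast congrArg (Nat.cast : ℕ → ℝ) h'
  have e3 : ((Rᶜ ∩ S).card : ℝ) + ((Rᶜ \ S).card : ℝ) + (R.card : ℝ) = (N : ℝ) := by
    have h' : (Rᶜ ∩ S).card + (Rᶜ \ S).card + R.card = N := by
      rw [Finset.card_inter_add_card_sdiff Rᶜ S]
      have := Finset.card_add_card_compl R
      simp only [Fintype.card_fin] at this
      omega
    exact_mod_cast congrArg (Nat.cast : ℕ → ℝ) h'
  have hhad : Had N S R = (-1 : ℝ) ^ c := rfl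
  rw [Lap, Adj, hap, ham, hhad, hfirst]
  rw [pow_succ]
  linear_combination ((-1:ℝ)^c) * (2*e2 - e1 - e3)
lemma had_prod (S R : Finset (Fin N)) :
    Had N S R = ∏ a ∈ S, (if a ∈ R then (-1 : ℝ) else 1) := by
  classical
  rw [Finset.prod_ite, Finset.prod_const, Finset.prod_const, one_pow, mul_one,
    Finset.filter_mem_eq_inter, Had, Finset.inter_comm]

lemma had_orth (R R' : Finset (Fin N)) :
    ∑ S : Finset (Fin N), Had N S R * Had N S R' = if R = R' then (2 : ℝ) ^ N else 0 := by
  classical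
  have h1 : ∀ S : Finset (Fin N), Had N S R * Had N S R'
      = ∏ a ∈ S, ((if a ∈ R then (-1 : ℝ) else 1) * (if a ∈ R' then (-1 : ℝ) else 1)) := by
    intro S
    rw [had_prod, had_prod, ← Finset.prod_mul_distrib]
  rw [Finset.sum_congr rfl (fun S _ => h1 S)]
  have h2 := Finset.prod_add
    (fun a => (if a ∈ R then (-1 : ℝ) else 1) * (if a ∈ R' then (-1 : ℝ) else 1))
    (fun _ => (1 : ℝ)) (Finset.univ : Finset (Fin N))
  simp only [Finset.prod_const_one, mul_one, Finset.powerset_univ] at h2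
  rw [← h2]
  by_cases h : R = R'
  · subst h
    rw [if_pos rfl]
    have : ∀ a ∈ (Finset.univ : Finset (Fin N)),
        ((if a ∈ R then (-1 : ℝ) else 1) * (if a ∈ R then (-1 : ℝ) else 1) + 1) = 2 := by
      intro a _
      by_cases ha : a ∈ R <;> simp [ha] <;> norm_num
    rw [Finset.prod_congr rfl this, Finset.prod_const, Finset.card_univ, Fintype.card_fin]
  · rw [if_neg h]
    have : ∃ a : Fin N, ¬ (a ∈ R ↔ a ∈ R') := by
      by_contra hcon
      push_neg at hcon
      exact h (Finset.ext fun a => hcon a)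
    obtain ⟨a, ha⟩ := this
    apply Finset.prod_eq_zero (Finset.mem_univ a)
    by_cases h1 : a ∈ R <;> by_cases h2 : a ∈ R' <;> simp [h1, h2] at ha ⊢

lemma had_decomp (V : Finset (Fin N) → ℝ) (R : Finset (Fin N)) :
    V R = ∑ S : Finset (Fin N), (inner' N V (Had N S) / 2 ^ N) * Had N S R := by
  classical
  have h2 : (2 : ℝ) ^ N ≠ 0 := by positivity
  have key : ∀ R' : Finset (Fin N),
      (∑ S : Finset (Fin N), V R' * Had N S R' * Had N S R / 2 ^ N)
        = if R' = R then V R' else 0 := by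
    intro R'
    rw [← Finset.sum_div]
    simp only [mul_assoc, ← Finset.mul_sum]
    rw [had_orth R' R]
    by_cases h : R' = R
    · rw [if_pos h, if_pos h]
      field_simp
    · rw [if_neg h, if_neg h, mul_zero, zero_div]
  calc V R = ∑ R' : Finset (Fin N), if R' = R then V R' else 0 := by
        rw [Finset.sum_ite_eq' Finset.univ R V]
        simp
    _ = ∑ R' : Finset (Fin N), ∑ S : Finset (Fin N),
          V R' * Had N S R' * Had N S R / 2 ^ N := by
        rw [Finset.sum_congr rfl (fun R' _ => (key R').symm)]
    _ = ∑ S : Finset (Fin N), (inner' N V (Had N S) / 2 ^ N) * Had N S R := by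
        rw [Finset.sum_comm]
        apply Finset.sum_congr rfl
        intro S _
        rw [inner']
        rw [div_mul_eq_mul_div, Finset.sum_mul, Finset.sum_div]

lemma lap_iter_eq (i : ℕ) (V : Finset (Fin N) → ℝ) :
    (Lap N)^[i] V = fun R => ∑ S : Finset (Fin N),
      (inner' N V (Had N S) / 2 ^ N) * (2 * (S.card : ℝ)) ^ i * Had N S R := by
  induction i with
  | zero =>
    funext R
    simpa using had_decomp V R
  | succ i ih =>
    rw [Function.iterate_succ_apply', ih]
    rw [lap_sum_smul (s := Finset.univ)
      (a := fun S => inner' N V (Had N S) / 2 ^ N * (2 * (S.card : ℝ)) ^ i)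
      (f := fun S => Had N S)]
    funext R
    apply Finset.sum_congr rfl
    intro S _
    have := congrFun (lap_had (N := N) S) R
    rw [this, pow_succ]
    ring
lemma exists_poly (N K : ℕ) : ∃ d : ℕ, ∃ cf : ℕ → ℝ, ∀ j ≤ N,
    ∑ i ∈ Finset.range (d + 1), cf i * (2 * (j : ℝ)) ^ i = if j ≤ K then 1 else 0 := by
  classical
  set v : ℕ → ℝ := fun j => 2 * j with hv
  have hinj : Set.InjOn v (Finset.range (N + 1)) := by
    intro a _ b _ hab
    have : (a : ℝ) = b := by
      have : 2 * (a : ℝ) = 2 * b := hab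
      linarith
    exact_mod_cast this
  set p := Lagrange.interpolate (Finset.range (N + 1)) v
    (fun j => if j ≤ K then (1 : ℝ) else 0) with hp
  refine ⟨p.natDegree, fun i => p.coeff i, ?_⟩
  intro j hj
  have hmem : j ∈ Finset.range (N + 1) := Finset.mem_range.mpr (by omega)
  have heval := Lagrange.eval_interpolate_at_node
    (r := fun j => if j ≤ K then (1 : ℝ) else 0) hinj hmem
  rw [← hp] at heval
  rw [← heval]
  exact (Polynomial.eval_eq_sum_range (p := p) (2 * (j:ℝ))).symm

lemma pk_eq {K : ℕ} (d : ℕ) (cf : ℕ → ℝ)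
    (hcf : ∀ j ≤ N, ∑ i ∈ Finset.range (d + 1), cf i * (2 * (j : ℝ)) ^ i
      = if j ≤ K then 1 else 0)
    (V : Finset (Fin N) → ℝ) (R : Finset (Fin N)) :
    PK N K V R = ∑ i ∈ Finset.range (d + 1), cf i * (Lap N)^[i] V R := by
  classical
  rw [Finset.sum_congr rfl (fun i (_ : i ∈ Finset.range (d+1)) => by
    rw [congrFun (lap_iter_eq i V) R])]
  simp only [Finset.mul_sum]
  rw [Finset.sum_comm]
  have hterm : ∀ S : Finset (Fin N),
      ∑ i ∈ Finset.range (d + 1),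
        cf i * (inner' N V (Had N S) / 2 ^ N * (2 * (S.card : ℝ)) ^ i * Had N S R)
      = if S.card ≤ K then inner' N V (Had N S) / 2 ^ N * Had N S R else 0 := by
    intro S
    have hSN : S.card ≤ N := by
      have := Finset.card_le_univ S
      simpa using this
    have hf : ∑ i ∈ Finset.range (d + 1),
        cf i * (inner' N V (Had N S) / 2 ^ N * (2 * (S.card : ℝ)) ^ i * Had N S R)
        = (∑ i ∈ Finset.range (d + 1), cf i * (2 * (S.card : ℝ)) ^ i)
          * (inner' N V (Had N S) / 2 ^ N * Had N S R) := by
      rw [Finset.sum_mul]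
      exact Finset.sum_congr rfl fun i _ => by ring
    rw [hf, hcf S.card hSN]
    by_cases h : S.card ≤ K
    · rw [if_pos h, if_pos h, one_mul]
    · rw [if_neg h, if_neg h, zero_mul]
  rw [Finset.sum_congr rfl (fun S _ => hterm S), PK, Finset.sum_filter]
def Lmat (N r k ℓ : ℕ) : ℝ :=
  (if k = ℓ then (N : ℝ) else 0) - (if k = ℓ + 1 then 1 else 0)
    - (if k + 1 = ℓ then mcoef N r k else 0)

def matpow (N r n : ℕ) : ℕ → ℕ → ℕ → ℝ
  | 0, k, ℓ => if k = ℓ then 1 else 0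
  | i + 1, k, ℓ => ∑ j ∈ Finset.range (n + 1), Lmat N r k j * matpow N r n i j ℓ

lemma aplus_top {r : ℕ} {W : Finset (Fin N) → ℝ} (hW : memW N r W) (hr : r ≤ N)
    (S : Finset (Fin N)) : (Aplus N)^[N - r + 1] W S = 0 := by
  apply suppOn_aplus_iter hW.1 (N - r + 1) S
  have : S.card ≤ N := by simpa using Finset.card_le_univ S
  omega

lemma lap_on_iter {r : ℕ} {W : Finset (Fin N) → ℝ} (hW : memW N r W) (hr : r ≤ N)
    {ℓ : ℕ} (hℓ : ℓ ≤ N - r) :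
    Lap N ((Aplus N)^[ℓ] W) = fun S =>
      ∑ k ∈ Finset.range (N - r + 1), Lmat N r k ℓ * (Aplus N)^[k] W S := by
  classical
  funext S
  have hsum : ∑ k ∈ Finset.range (N - r + 1), Lmat N r k ℓ * (Aplus N)^[k] W S
      = (N : ℝ) * (Aplus N)^[ℓ] W S
        - (if ℓ + 1 ≤ N - r then (Aplus N)^[ℓ + 1] W S else 0)
        - ∑ k ∈ Finset.range (N - r + 1),
            (if k + 1 = ℓ then mcoef N r k else 0) * (Aplus N)^[k] W S := by
    simp only [Lmat, sub_mul]
    rw [Finset.sum_sub_distrib, Finset.sum_sub_distrib]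
    congr 1
    congr 1
    · simp only [ite_mul, zero_mul]
      rw [Finset.sum_ite_eq' (Finset.range (N - r + 1)) ℓ
        (fun k => (N : ℝ) * (Aplus N)^[k] W S)]
      rw [if_pos (Finset.mem_range.mpr (by omega))]
    · simp only [ite_mul, zero_mul, one_mul]
      rw [Finset.sum_ite_eq' (Finset.range (N - r + 1)) (ℓ + 1)
        (fun k => (Aplus N)^[k] W S)]
      by_cases h : ℓ + 1 ≤ N - r
      · rw [if_pos (Finset.mem_range.mpr (by omega)), if_pos h]
      · rw [if_neg (fun hc => h (Nat.lt_succ_iff.mp (Finset.mem_range.mp hc))), if_neg h]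
  rw [hsum]
  have hminus : Aminus N ((Aplus N)^[ℓ] W) S
      = ∑ k ∈ Finset.range (N - r + 1),
          (if k + 1 = ℓ then mcoef N r k else 0) * (Aplus N)^[k] W S := by
    cases ℓ with
    | zero =>
      rw [Function.iterate_zero_apply, congrFun (aminus_zero hW) S]
      symm
      apply Finset.sum_eq_zero
      intro k _
      simp
    | succ m =>
      rw [congrFun (aminus_iter hW m) S]
      have hcond : ∀ k, (k + 1 = m + 1) ↔ (k = m) := by omega
      have : ∀ k ∈ Finset.range (N - r + 1),
          (if k + 1 = m + 1 then mcoef N r k else 0) * (Aplus N)^[k] W S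
          = if k = m then mcoef N r k * (Aplus N)^[k] W S else 0 := by
        intro k _
        by_cases h : k = m
        · rw [if_pos ((hcond k).mpr h), if_pos h]
        · rw [if_neg (fun hc => h ((hcond k).mp hc)), if_neg h, zero_mul]
      rw [Finset.sum_congr rfl this, Finset.sum_ite_eq' (Finset.range (N - r + 1)) m
        (fun k => mcoef N r k * (Aplus N)^[k] W S)]
      rw [if_pos (Finset.mem_range.mpr (by omega))]
  have hplus : (if ℓ + 1 ≤ N - r then (Aplus N)^[ℓ + 1] W S else 0)
      = (Aplus N)^[ℓ + 1] W S := by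
    split
    · rfl
    · have hl : ℓ = N - r := by omega
      subst hl
      exact (aplus_top hW hr S).symm
  rw [hplus, Lap, Adj, hminus, ← Function.iterate_succ_apply' (Aplus N) ℓ W]
  ring

lemma lap_iter_rep {r : ℕ} {W : Finset (Fin N) → ℝ} (hW : memW N r W) (hr : r ≤ N)
    (i : ℕ) {ℓ : ℕ} (hℓ : ℓ ≤ N - r) :
    (Lap N)^[i] ((Aplus N)^[ℓ] W) = fun S =>
      ∑ k ∈ Finset.range (N - r + 1), matpow N r (N - r) i k ℓ * (Aplus N)^[k] W S := by
  classical
  induction i with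
  | zero =>
    funext S
    rw [Function.iterate_zero_apply]
    symm
    have : ∀ k ∈ Finset.range (N - r + 1),
        matpow N r (N - r) 0 k ℓ * (Aplus N)^[k] W S
        = if k = ℓ then (Aplus N)^[k] W S else 0 := by
      intro k _
      simp only [matpow, ite_mul, zero_mul, one_mul]
    rw [Finset.sum_congr rfl this, Finset.sum_ite_eq' (Finset.range (N - r + 1)) ℓ
      (fun k => (Aplus N)^[k] W S)]
    rw [if_pos (Finset.mem_range.mpr (by omega))]
  | succ i ih =>
    rw [Function.iterate_succ_apply', ih,
      lap_sum_smul (s := Finset.range (N - r + 1))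
        (a := fun k => matpow N r (N - r) i k ℓ) (f := fun k => (Aplus N)^[k] W)]
    funext S
    have hstep : ∀ j ∈ Finset.range (N - r + 1),
        matpow N r (N - r) i j ℓ * Lap N ((Aplus N)^[j] W) S
        = ∑ k ∈ Finset.range (N - r + 1),
            matpow N r (N - r) i j ℓ * (Lmat N r k j * (Aplus N)^[k] W S) := by
      intro j hj
      rw [congrFun (lap_on_iter hW hr (Finset.mem_range.mp hj |> Nat.lt_succ_iff.mp)) S,
        Finset.mul_sum]
    rw [Finset.sum_congr rfl hstep, Finset.sum_comm]
    apply Finset.sum_congr rfl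
    intro k _
    show _ = matpow N r (N - r) (i + 1) k ℓ * (Aplus N)^[k] W S
    rw [matpow, Finset.sum_mul]
    apply Finset.sum_congr rfl
    intro j _
    ring
/-- there is a matrix `M` of size `(N−r+1)×(N−r+1)`, independent of `W`,
with `P_K(A₊^{ℓ}W) = Σ_{k=0}^{N−r} M(k,ℓ)·A₊^{k}W` for all `W ∈ W_r`, `0 ≤ ℓ ≤ N−r`. -/
theorem PK_coefficient_matrix (N r K : ℕ) (hN : 1 ≤ N) (hr : r ≤ N) (hK : K < N) :
    ∃ M : ℕ → ℕ → ℝ, ∀ W : Finset (Fin N) → ℝ, memW N r W → ∀ ℓ ≤ N - r,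
      PK N K ((Aplus N)^[ℓ] W)
        = ∑ k ∈ Finset.range (N - r + 1), M k ℓ • (Aplus N)^[k] W := by
  classical
  obtain ⟨d, cf, hcf⟩ := exists_poly N K
  refine ⟨fun k ℓ => ∑ i ∈ Finset.range (d + 1), cf i * matpow N r (N - r) i k ℓ, ?_⟩
  intro W hW ℓ hℓ
  funext R
  rw [pk_eq d cf hcf ((Aplus N)^[ℓ] W) R]
  have hrep : ∀ i ∈ Finset.range (d + 1),
      cf i * (Lap N)^[i] ((Aplus N)^[ℓ] W) R
      = ∑ k ∈ Finset.range (N - r + 1),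
          cf i * (matpow N r (N - r) i k ℓ * (Aplus N)^[k] W R) := by
    intro i _
    rw [congrFun (lap_iter_rep hW hr i hℓ) R, Finset.mul_sum]
  rw [Finset.sum_congr rfl hrep, Finset.sum_comm, Finset.sum_apply]
  apply Finset.sum_congr rfl
  intro k _
  rw [Pi.smul_apply, smul_eq_mul, Finset.sum_mul]
  apply Finset.sum_congr rfl
  intro i _
  ring
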